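/- arXiv:2303.14529 — 2 statements merged into one kernel-verified Lean document; each statement's English description precedes it below -/
import Mathlib

section
/- A formula A of L is a DI9 logical consequence of a set Γ of formulas of L if and only if, for every DI9 valuation α for L, if α*(B) = T for all elements B of Γ then α*(A) = T. -/
/-- Formulas of the propositional language L: countably many atoms,
negation, and disjunction. -/
inductive Form : Type
  | atom : ℕ → Form
  | neg : Form → Form
  | disj : Form → Form → Form

/-- The three values: the truth values `T`, `F`, and the value `O`
(absence of truth value). -/
inductive Val3 : Type
  | T : Val3
  | F : Val3
  | O : Val3
  deriving DecidableEq

/-- A DI9 valuation for L: a function from (atomic formula, real number)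
to {T, F, O} satisfying persistence of truth values and weak bivalence. -/
structure DI9Val where
  val : ℕ → ℝ → Val3
  mono_T : ∀ (n : ℕ) (j h : ℝ), j < h → val n j = Val3.T → val n h = Val3.T
  mono_F : ∀ (n : ℕ) (j h : ℝ), j < h → val n j = Val3.F → val n h = Val3.F
  eventually_tv : ∀ n : ℕ, ∃ j : ℝ, val n j = Val3.T ∨ val n j = Val3.F

-- The DI9 classical interpretation α* associated to a DI9 valuation α.
open Classical in
noncomputable def cstar (α : DI9Val) : Form → Val3
  | .atom n => if ∃ j : ℝ, α.val n j = Val3.T then Val3.T else Val3.F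
  | .neg B => if cstar α B = Val3.F then Val3.T else Val3.F
  | .disj B C => if cstar α B = Val3.T ∨ cstar α C = Val3.T then Val3.T else Val3.F

/-- β is a j-extension of α: they agree on all atomic formulas at all times ≤ j. -/
def IsJExt (β α : DI9Val) (j : ℝ) : Prop :=
  ∀ (n : ℕ) (h : ℝ), h ≤ j → β.val n h = α.val n h

-- The DI9 interpretation Iα associated to a DI9 valuation α.
open Classical in
noncomputable def interp (α : DI9Val) : Form → ℝ → Val3
  | .atom n, j => α.val n j
  | .neg B, j =>
      match interp α B j with
      | Val3.T => Val3.F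
      | Val3.F => Val3.T
      | Val3.O => Val3.O
  | .disj B C, j =>
      if ∀ β : DI9Val, IsJExt β α j → (cstar β B = Val3.T ∨ cstar β C = Val3.T) then
        Val3.T
      else if ∀ β : DI9Val, IsJExt β α j → (cstar β B = Val3.F ∧ cstar β C = Val3.F) then
        Val3.F
      else Val3.O

/-- A classical interpretation for L. -/
structure ClassInterp where
  val : Form → Val3
  tv : ∀ A : Form, val A = Val3.T ∨ val A = Val3.F
  neg_iff : ∀ B : Form, val (.neg B) = Val3.T ↔ val B = Val3.F
  disj_iff : ∀ B C : Form, val (.disj B C) = Val3.T ↔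
    (val B = Val3.T ∨ val C = Val3.T)

/-- A is a tautological consequence of Γ in the sense of classical semantics. -/
def TautConseq (Γ : Set Form) (A : Form) : Prop :=
  ∀ Ic : ClassInterp, (∀ B ∈ Γ, Ic.val B = Val3.T) → Ic.val A = Val3.T

/-- A is a DI9 logical consequence of Γ. -/
def DI9Conseq (Γ : Set Form) (A : Form) : Prop :=
  ∀ (j : ℝ) (α : DI9Val), (∀ B ∈ Γ, interp α B j = Val3.T) → interp α A j = Val3.T

/-!
`Iα(A, j)` is `T` exactly when every `j`-extension of `α` makes `A` classically true, and `F`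
exactly when every one makes it false; for atoms this holds because a `j`-extension may give an
atom still undecided at time `j` either truth value from then on. Hence if `Γ` holds under `Iα`
at `j`, it holds classically in every `j`-extension of `α`, and so does `A`. Conversely, the
valuation that is constant in time with the atomic truth values of `α*` is decided at every time,
so all its extensions share its classical interpretation, which is `α*`: for this valuation
`Iα` and `α*` make the same formulas true.
-/

open Val3

namespace DI9Val

variable (α : DI9Val)

lemma val_eq_T_of_le {n : ℕ} {j h : ℝ} (hjh : j ≤ h) (hT : α.val n j = T) :
    α.val n h = T := by
  rcases hjh.lt_or_eq with hlt | rfl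
  · exact α.mono_T n j h hlt hT
  · exact hT

lemma val_eq_F_of_le {n : ℕ} {j h : ℝ} (hjh : j ≤ h) (hF : α.val n j = F) :
    α.val n h = F := by
  rcases hjh.lt_or_eq with hlt | rfl
  · exact α.mono_F n j h hlt hF
  · exact hF

lemma val_ne_T_of_eq_F {n : ℕ} {j : ℝ} (hF : α.val n j = F) (h : ℝ) : α.val n h ≠ T := by
  intro hT
  rcases le_total h j with hhj | hjh
  · exact absurd (hF.symm.trans (α.val_eq_T_of_le hhj hT)) (by decide)
  · exact absurd (hT.symm.trans (α.val_eq_F_of_le hjh hF)) (by decide)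

def IsDecidedAt (j : ℝ) : Prop :=
  ∀ n, α.val n j = T ∨ α.val n j = F

lemma exists_val_eq_T_iff_of_isDecidedAt {j : ℝ} (hα : α.IsDecidedAt j) (n : ℕ) :
    (∃ h, α.val n h = T) ↔ α.val n j = T := by
  refine ⟨fun ⟨h, hT⟩ => ?_, fun hT => ⟨j, hT⟩⟩
  rcases hα n with hj | hj
  · exact hj
  · exact absurd hT (α.val_ne_T_of_eq_F hj h)

noncomputable def extendAfter (j : ℝ) (p : ℕ → Prop) [DecidablePred p]
    (hT : ∀ n, α.val n j = T → p n) (hF : ∀ n, α.val n j = F → ¬ p n) : DI9Val where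
  val n h := if h ≤ j then α.val n h else if p n then T else F
  mono_T n a b hab ha := by
    by_cases hb : b ≤ j
    · simp only [hb, hab.le.trans hb, if_true] at ha ⊢
      exact α.mono_T n a b hab ha
    · by_cases haj : a ≤ j
      · simp only [haj, hb, if_true, if_false] at ha ⊢
        simp [hT n (α.val_eq_T_of_le haj ha)]
      · simpa only [haj, hb, if_false] using ha
  mono_F n a b hab ha := by
    by_cases hb : b ≤ j
    · simp only [hb, hab.le.trans hb, if_true] at ha ⊢
      exact α.mono_F n a b hab ha
    · by_cases haj : a ≤ j
      · simp only [haj, hb, if_true, if_false] at ha ⊢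
        simp [hF n (α.val_eq_F_of_le haj ha)]
      · simpa only [haj, hb, if_false] using ha
  eventually_tv n := ⟨j + 1, by
    simp only [show ¬ j + 1 ≤ j by linarith, if_false]
    split_ifs <;> simp⟩

noncomputable def constOfCstar : DI9Val where
  val n _ := cstar α (.atom n)
  mono_T _ _ _ _ h := h
  mono_F _ _ _ _ h := h
  eventually_tv n := ⟨0, by simp only [cstar]; split_ifs <;> simp⟩

lemma constOfCstar_isDecidedAt (j : ℝ) : α.constOfCstar.IsDecidedAt j := fun n => by
  simp only [constOfCstar, cstar]; split_ifs <;> simp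

end DI9Val

section ClassicalInterpretation

variable (α : DI9Val)

lemma cstar_eq_T_or_F (A : Form) : cstar α A = T ∨ cstar α A = F := by
  cases A <;> simp only [cstar] <;> split_ifs <;> simp

lemma cstar_ne_T_iff (A : Form) : cstar α A ≠ T ↔ cstar α A = F := by
  rcases cstar_eq_T_or_F α A with h | h <;> simp [h]

lemma cstar_atom_eq_T (n : ℕ) : cstar α (.atom n) = T ↔ ∃ j, α.val n j = T := by
  simp only [cstar]; split_ifs with h <;> simp [h]

lemma cstar_neg_eq_T (B : Form) : cstar α (.neg B) = T ↔ cstar α B = F := by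
  simp only [cstar]; split_ifs with h <;> simp [h]

lemma cstar_neg_eq_F (B : Form) : cstar α (.neg B) = F ↔ cstar α B = T := by
  simp only [cstar]; rcases cstar_eq_T_or_F α B with h | h <;> simp [h]

lemma cstar_disj_eq_T (B C : Form) :
    cstar α (.disj B C) = T ↔ cstar α B = T ∨ cstar α C = T := by
  simp only [cstar]; split_ifs with h <;> simp [h]

lemma cstar_disj_eq_F (B C : Form) :
    cstar α (.disj B C) = F ↔ cstar α B = F ∧ cstar α C = F := by
  rw [← cstar_ne_T_iff, Ne, cstar_disj_eq_T, not_or, ← Ne, ← Ne, cstar_ne_T_iff, cstar_ne_T_iff]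

lemma cstar_congr {β : DI9Val} (h : ∀ n, (∃ j, β.val n j = T) ↔ ∃ j, α.val n j = T)
    (A : Form) : cstar β A = cstar α A := by
  induction A with
  | atom n => classical exact if_congr (h n) rfl rfl
  | neg B ih => simp only [cstar, ih]
  | disj B C ihB ihC => simp only [cstar, ihB, ihC]

lemma cstar_constOfCstar : cstar α.constOfCstar = cstar α :=
  funext <| cstar_congr α fun n => by
    rw [← cstar_atom_eq_T α]
    exact ⟨fun ⟨_, h⟩ => h, fun h => ⟨0, h⟩⟩

end ClassicalInterpretation

section Extensions

variable {α β : DI9Val} {j : ℝ}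

lemma isJExt_refl (α : DI9Val) (j : ℝ) : IsJExt α α j := fun _ _ _ => rfl

lemma IsJExt.cstar_atom_eq_T (hβ : IsJExt β α j) {n : ℕ} (hT : α.val n j = T) :
    cstar β (.atom n) = T :=
  (_root_.cstar_atom_eq_T β n).mpr ⟨j, (hβ n j le_rfl).trans hT⟩

lemma IsJExt.cstar_atom_eq_F (hβ : IsJExt β α j) {n : ℕ} (hF : α.val n j = F) :
    cstar β (.atom n) = F := by
  rw [← cstar_ne_T_iff, Ne, _root_.cstar_atom_eq_T]
  exact fun ⟨h, hT⟩ => β.val_ne_T_of_eq_F ((hβ n j le_rfl).trans hF) h hT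

lemma exists_isJExt_cstar_atom_eq_T_iff (p : ℕ → Prop)
    (hT : ∀ n, α.val n j = T → p n) (hF : ∀ n, α.val n j = F → ¬ p n) :
    ∃ β, IsJExt β α j ∧ ∀ n, cstar β (.atom n) = T ↔ p n := by
  classical
  refine ⟨α.extendAfter j p hT hF, fun n h hh => if_pos hh, fun n => ?_⟩
  rw [cstar_atom_eq_T]
  constructor
  · rintro ⟨h, hh⟩
    simp only [DI9Val.extendAfter] at hh
    split_ifs at hh with hhj hp
    · exact hT n (α.val_eq_T_of_le hhj hh)
    · exact hp
  · intro hp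
    exact ⟨j + 1, by simp [DI9Val.extendAfter, hp]⟩

lemma IsJExt.isDecidedAt (hβ : IsJExt β α j) (hα : α.IsDecidedAt j) : β.IsDecidedAt j :=
  fun n => hβ n j le_rfl ▸ hα n

lemma IsJExt.cstar_eq_of_isDecidedAt (hβ : IsJExt β α j) (hα : α.IsDecidedAt j) :
    cstar β = cstar α :=
  funext <| cstar_congr α fun n => by
    rw [β.exists_val_eq_T_iff_of_isDecidedAt (hβ.isDecidedAt hα),
      α.exists_val_eq_T_iff_of_isDecidedAt hα, hβ n j le_rfl]

end Extensions

section Interpretation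

variable (α : DI9Val) (j : ℝ)

lemma interp_atom_eq_T_iff (n : ℕ) :
    interp α (.atom n) j = T ↔ ∀ β, IsJExt β α j → cstar β (.atom n) = T := by
  refine ⟨fun hT β hβ => hβ.cstar_atom_eq_T hT, fun h => ?_⟩
  obtain ⟨β, hβ, hβT⟩ := exists_isJExt_cstar_atom_eq_T_iff (α := α) (j := j)
    (fun m => α.val m j = T) (fun _ => id) (fun _ hF hT => absurd (hT.symm.trans hF) (by decide))
  exact (hβT n).mp (h β hβ)

lemma interp_atom_eq_F_iff (n : ℕ) :
    interp α (.atom n) j = F ↔ ∀ β, IsJExt β α j → cstar β (.atom n) = F := by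
  refine ⟨fun hF β hβ => hβ.cstar_atom_eq_F hF, fun h => ?_⟩
  obtain ⟨β, hβ, hβT⟩ := exists_isJExt_cstar_atom_eq_T_iff (α := α) (j := j)
    (fun m => α.val m j ≠ F) (fun _ hT hF => absurd (hT.symm.trans hF) (by decide))
    (fun _ hF hne => hne hF)
  by_contra hne
  exact (cstar_ne_T_iff β _).mpr (h β hβ) ((hβT n).mpr hne)

lemma interp_neg_eq_T_iff (B : Form) : interp α (.neg B) j = T ↔ interp α B j = F := by
  simp only [interp]; split <;> simp_all

lemma interp_neg_eq_F_iff (B : Form) : interp α (.neg B) j = F ↔ interp α B j = T := by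
  simp only [interp]; split <;> simp_all

lemma interp_disj_eq_T_iff (B C : Form) :
    interp α (.disj B C) j = T ↔ ∀ β, IsJExt β α j → cstar β (.disj B C) = T := by
  simp only [cstar_disj_eq_T, interp]
  split_ifs with hT hF
  · exact iff_of_true rfl hT
  · exact iff_of_false (by decide) hT
  · exact iff_of_false (by decide) hT

lemma interp_disj_eq_F_iff (B C : Form) :
    interp α (.disj B C) j = F ↔ ∀ β, IsJExt β α j → cstar β (.disj B C) = F := by
  simp only [cstar_disj_eq_F, interp]
  split_ifs with hT hF
  · refine iff_of_false (by decide) fun hF => ?_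
    obtain ⟨hB, hC⟩ := hF α (isJExt_refl α j)
    rcases hT α (isJExt_refl α j) with h | h <;> simp_all
  · exact iff_of_true rfl hF
  · exact iff_of_false (by decide) hF

theorem interp_eq_T_iff_and_eq_F_iff (A : Form) :
    (interp α A j = T ↔ ∀ β, IsJExt β α j → cstar β A = T) ∧
      (interp α A j = F ↔ ∀ β, IsJExt β α j → cstar β A = F) := by
  induction A with
  | atom n => exact ⟨interp_atom_eq_T_iff α j n, interp_atom_eq_F_iff α j n⟩
  | neg B ih =>
    simp only [interp_neg_eq_T_iff, interp_neg_eq_F_iff, cstar_neg_eq_T, cstar_neg_eq_F]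
    exact ih.symm
  | disj B C => exact ⟨interp_disj_eq_T_iff α j B C, interp_disj_eq_F_iff α j B C⟩

theorem interp_eq_T_iff (A : Form) :
    interp α A j = T ↔ ∀ β, IsJExt β α j → cstar β A = T :=
  (interp_eq_T_iff_and_eq_F_iff α j A).1

lemma interp_eq_T_iff_cstar_of_isDecidedAt {α : DI9Val} {j : ℝ} (hα : α.IsDecidedAt j)
    (A : Form) : interp α A j = T ↔ cstar α A = T := by
  rw [interp_eq_T_iff]
  exact ⟨fun h => h α (isJExt_refl α j),
    fun h β hβ => (hβ.cstar_eq_of_isDecidedAt hα).symm ▸ h⟩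

end Interpretation

theorem stmt_12 (Γ : Set Form) (A : Form) :
    DI9Conseq Γ A ↔
      ∀ α : DI9Val, (∀ B ∈ Γ, cstar α B = Val3.T) → cstar α A = Val3.T := by
  constructor
  · intro hconseq α hΓ
    have hdec := α.constOfCstar_isDecidedAt 0
    have hA := hconseq 0 α.constOfCstar fun B hB =>
      (interp_eq_T_iff_cstar_of_isDecidedAt hdec B).mpr (cstar_constOfCstar α ▸ hΓ B hB)
    exact cstar_constOfCstar α ▸ (interp_eq_T_iff_cstar_of_isDecidedAt hdec A).mp hA
  · intro hclassical j α hΓ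
    exact (interp_eq_T_iff α j A).mpr fun β hβ =>
      hclassical β fun B hB => (interp_eq_T_iff α j B).mp (hΓ B hB) β hβ
end

section
/- A formula A of L is a DI9 logical truth if and only if α*(A) = T for every DI9 valuation α for L; equivalently, A is true in every DI9 interpretation at every real number if and only if A is true in every DI9 interpretation at some real number. -/
open Classical

lemma cstar_tv (α : DI9Val) (A : Form) : cstar α A = Val3.T ∨ cstar α A = Val3.F := by
  cases A <;> simp only [cstar] <;> split <;> simp

lemma interp_cstar (α : DI9Val) (A : Form) (j : ℝ) :
    (interp α A j = Val3.T → cstar α A = Val3.T) ∧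
    (interp α A j = Val3.F → cstar α A = Val3.F) := by
  induction A with
  | atom n =>
    constructor
    · intro h
      simp only [interp] at h
      simp only [cstar]
      rw [if_pos (show ∃ h', α.val n h' = Val3.T from ⟨j, h⟩)]
    · intro h
      simp only [interp] at h
      simp only [cstar]
      rw [if_neg]
      rintro ⟨h', hT⟩
      rcases lt_trichotomy h' j with hc | hc | hc
      · have := α.mono_T n h' j hc hT; rw [h] at this; exact Val3.noConfusion this
      · rw [hc, h] at hT; exact Val3.noConfusion hT
      · have := α.mono_F n j h' hc h; rw [hT] at this; exact Val3.noConfusion this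
  | neg B ih =>
    constructor
    · intro h
      cases hb : interp α B j <;> simp only [interp, hb] at h
      · exact Val3.noConfusion h
      · simp only [cstar, if_pos (ih.2 hb)]
      · exact Val3.noConfusion h
    · intro h
      cases hb : interp α B j <;> simp only [interp, hb] at h
      · have hB := ih.1 hb
        simp only [cstar]
        rw [if_neg]
        rw [hB]; exact fun hx => Val3.noConfusion hx
      · exact Val3.noConfusion h
      · exact Val3.noConfusion h
  | disj B C ihB ihC =>
    have hself : IsJExt α α j := fun n h _ => rfl
    constructor
    · intro h
      simp only [interp] at h
      split at h
      · next hall =>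
        simp only [cstar, if_pos (hall α hself)]
      · split at h
        · exact Val3.noConfusion h
        · exact Val3.noConfusion h
    · intro h
      simp only [interp] at h
      split at h
      · exact Val3.noConfusion h
      · split at h
        · next hall =>
          obtain ⟨hbF, hcF⟩ := hall α hself
          simp only [cstar]
          rw [if_neg]
          rintro (hx | hx)
          · rw [hbF] at hx; exact Val3.noConfusion hx
          · rw [hcF] at hx; exact Val3.noConfusion hx
        · exact Val3.noConfusion h

noncomputable def tweak (α : DI9Val) (n : ℕ) (j : ℝ) (v : Val3) (m : ℕ) (h : ℝ) : Val3 :=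
  if m = n ∧ j < h then v else α.val m h

lemma exists_ext_F (α : DI9Val) (n : ℕ) (j : ℝ) (hne : α.val n j ≠ Val3.T) :
    ∃ β : DI9Val, IsJExt β α j ∧ cstar β (.atom n) = Val3.F := by
  have noT : ∀ h ≤ j, α.val n h ≠ Val3.T := by
    intro h hle hT
    rcases lt_or_eq_of_le hle with hc | hc
    · exact hne (α.mono_T n h j hc hT)
    · exact hne (hc ▸ hT)
  refine ⟨⟨tweak α n j Val3.F, ?_, ?_, ?_⟩, ?_, ?_⟩
  · intro m j1 j2 hlt hT
    simp only [tweak] at hT ⊢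
    by_cases hm : m = n
    · subst hm
      by_cases h1 : j < j1
      · rw [if_pos (show m = m ∧ j < j1 from ⟨rfl, h1⟩)] at hT
        exact absurd hT (by simp)
      · rw [if_neg (fun hc => h1 hc.2)] at hT
        exact absurd hT (noT j1 (not_lt.mp h1))
    · rw [if_neg (fun hc => hm hc.1)] at hT
      rw [if_neg (fun hc => hm hc.1)]
      exact α.mono_T m j1 j2 hlt hT
  · intro m j1 j2 hlt hF
    simp only [tweak] at hF ⊢
    by_cases hm : m = n
    · subst hm
      by_cases h2 : j < j2
      · rw [if_pos (show m = m ∧ j < j2 from ⟨rfl, h2⟩)]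
      · have h1 : ¬ j < j1 := fun hc => h2 (lt_trans hc hlt)
        rw [if_neg (fun hc => h1 hc.2)] at hF
        rw [if_neg (fun hc => h2 hc.2)]
        exact α.mono_F m j1 j2 hlt hF
    · rw [if_neg (fun hc => hm hc.1)] at hF
      rw [if_neg (fun hc => hm hc.1)]
      exact α.mono_F m j1 j2 hlt hF
  · intro m
    by_cases hm : m = n
    · subst hm
      refine ⟨j + 1, Or.inr ?_⟩
      simp only [tweak]
      rw [if_pos (show True ∧ j < j + 1 from ⟨trivial, by linarith⟩)]
    · obtain ⟨h, hh⟩ := α.eventually_tv m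
      refine ⟨h, ?_⟩
      simp only [tweak]
      rw [if_neg (fun hc => hm hc.1)]
      exact hh
  · intro m h hle
    simp only [tweak]
    rw [if_neg]
    rintro ⟨_, hlt⟩
    exact absurd hle (not_le.mpr hlt)
  · simp only [cstar]
    rw [if_neg]
    rintro ⟨h, hT⟩
    simp only [tweak] at hT
    by_cases hc : j < h
    · rw [if_pos (show True ∧ j < h from ⟨trivial, hc⟩)] at hT
      exact absurd hT (by simp)
    · rw [if_neg (fun hx => hc hx.2)] at hT
      exact noT h (not_lt.mp hc) hT

lemma exists_ext_T (α : DI9Val) (n : ℕ) (j : ℝ) (hne : α.val n j ≠ Val3.F) :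
    ∃ β : DI9Val, IsJExt β α j ∧ cstar β (.atom n) = Val3.T := by
  have noF : ∀ h ≤ j, α.val n h ≠ Val3.F := by
    intro h hle hF
    rcases lt_or_eq_of_le hle with hc | hc
    · exact hne (α.mono_F n h j hc hF)
    · exact hne (hc ▸ hF)
  refine ⟨⟨tweak α n j Val3.T, ?_, ?_, ?_⟩, ?_, ?_⟩
  · intro m j1 j2 hlt hT
    simp only [tweak] at hT ⊢
    by_cases hm : m = n
    · subst hm
      by_cases h2 : j < j2
      · rw [if_pos (show m = m ∧ j < j2 from ⟨rfl, h2⟩)]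
      · have h1 : ¬ j < j1 := fun hc => h2 (lt_trans hc hlt)
        rw [if_neg (fun hc => h1 hc.2)] at hT
        rw [if_neg (fun hc => h2 hc.2)]
        exact α.mono_T m j1 j2 hlt hT
    · rw [if_neg (fun hc => hm hc.1)] at hT
      rw [if_neg (fun hc => hm hc.1)]
      exact α.mono_T m j1 j2 hlt hT
  · intro m j1 j2 hlt hF
    simp only [tweak] at hF ⊢
    by_cases hm : m = n
    · subst hm
      by_cases h1 : j < j1
      · rw [if_pos (show m = m ∧ j < j1 from ⟨rfl, h1⟩)] at hF
        exact absurd hF (by simp)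
      · rw [if_neg (fun hc => h1 hc.2)] at hF
        exact absurd hF (noF j1 (not_lt.mp h1))
    · rw [if_neg (fun hc => hm hc.1)] at hF
      rw [if_neg (fun hc => hm hc.1)]
      exact α.mono_F m j1 j2 hlt hF
  · intro m
    by_cases hm : m = n
    · subst hm
      refine ⟨j + 1, Or.inl ?_⟩
      simp only [tweak]
      rw [if_pos (show True ∧ j < j + 1 from ⟨trivial, by linarith⟩)]
    · obtain ⟨h, hh⟩ := α.eventually_tv m
      refine ⟨h, ?_⟩
      simp only [tweak]
      rw [if_neg (fun hc => hm hc.1)]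
      exact hh
  · intro m h hle
    simp only [tweak]
    rw [if_neg]
    rintro ⟨_, hlt⟩
    exact absurd hle (not_le.mpr hlt)
  · simp only [cstar]
    rw [if_pos]
    refine ⟨j + 1, ?_⟩
    simp only [tweak]
    rw [if_pos (show True ∧ j < j + 1 from ⟨trivial, by linarith⟩)]

lemma cstar_interp (A : Form) : ∀ (α : DI9Val) (j : ℝ),
    ((∀ β : DI9Val, IsJExt β α j → cstar β A = Val3.T) → interp α A j = Val3.T) ∧
    ((∀ β : DI9Val, IsJExt β α j → cstar β A = Val3.F) → interp α A j = Val3.F) := by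
  induction A with
  | atom n =>
    intro α j
    constructor
    · intro H
      show α.val n j = Val3.T
      by_contra hne
      obtain ⟨β, hext, hF⟩ := exists_ext_F α n j hne
      rw [H β hext] at hF
      exact Val3.noConfusion hF
    · intro H
      show α.val n j = Val3.F
      by_contra hne
      obtain ⟨β, hext, hT⟩ := exists_ext_T α n j hne
      rw [H β hext] at hT
      exact Val3.noConfusion hT
  | neg B ih =>
    intro α j
    constructor
    · intro H
      have hB : interp α B j = Val3.F := by
        apply (ih α j).2
        intro β hext
        have := H β hext
        simp only [cstar] at this
        by_contra hc
        rw [if_neg hc] at this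
        exact Val3.noConfusion this
      simp only [interp, hB]
    · intro H
      have hB : interp α B j = Val3.T := by
        apply (ih α j).1
        intro β hext
        have := H β hext
        simp only [cstar] at this
        rcases cstar_tv β B with h | h
        · exact h
        · rw [if_pos h] at this; exact Val3.noConfusion this
      simp only [interp, hB]
  | disj B C ihB ihC =>
    intro α j
    have hself : IsJExt α α j := fun n h _ => rfl
    constructor
    · intro H
      simp only [interp]
      rw [if_pos]
      intro β hext
      have := H β hext
      simp only [cstar] at this
      by_contra hc
      rw [if_neg hc] at this
      exact Val3.noConfusion this
    · intro H
      have key : ∀ β : DI9Val, IsJExt β α j → cstar β B = Val3.F ∧ cstar β C = Val3.F := by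
        intro β hext
        have := H β hext
        simp only [cstar] at this
        by_cases hc : cstar β B = Val3.T ∨ cstar β C = Val3.T
        · rw [if_pos hc] at this; exact Val3.noConfusion this
        · push_neg at hc
          exact ⟨(cstar_tv β B).resolve_left hc.1, (cstar_tv β C).resolve_left hc.2⟩
      simp only [interp]
      rw [if_neg, if_pos key]
      intro hall
      obtain ⟨hbF, hcF⟩ := key α hself
      rcases hall α hself with hx | hx
      · rw [hbF] at hx; exact Val3.noConfusion hx
      · rw [hcF] at hx; exact Val3.noConfusion hx

theorem stmt_13 (A : Form) :
    ((∀ (α : DI9Val) (j : ℝ), interp α A j = Val3.T) ↔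
      (∀ α : DI9Val, cstar α A = Val3.T)) ∧
    ((∀ (α : DI9Val) (j : ℝ), interp α A j = Val3.T) ↔
      (∀ α : DI9Val, ∃ j : ℝ, interp α A j = Val3.T)) := by
  have key1 : (∀ α : DI9Val, cstar α A = Val3.T) →
      ∀ (α : DI9Val) (j : ℝ), interp α A j = Val3.T := by
    intro h α j
    exact (cstar_interp A α j).1 (fun β _ => h β)
  refine ⟨⟨fun h α => (interp_cstar α A 0).1 (h α 0), key1⟩,
    ⟨fun h α => ⟨0, h α 0⟩, fun h => key1 fun α' => ?_⟩⟩
  obtain ⟨j, hj⟩ := h α'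
  exact (interp_cstar α' A j).1 hj
end
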